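/- Fix reals α > 0 and σ > 0. Let π : ℝ → [0,∞) be differentiable with ∫ π(x_0) dx_0 = 1, ∫ |x_0| · π(x_0) dx_0 < ∞, π′ Lebesgue-integrable, and π(x_0) → 0 as x_0 → ±∞. Define p(x) := ∫ π(x_0) · N(x; α·x_0, σ²) dx_0. Then p is differentiable on ℝ and satisfies the target score identity p′(x) = (1/α) · ∫ π′(x_0) · N(x; α·x_0, σ²) dx_0; equivalently, wherever quantities are defined, the score ∇ log p(x) equals (1/α) times the posterior expectation of ∇ log π(x_0) under the denoising posterior p(x_0 | x) ∝ π(x_0)·N(x; α·x_0, σ²). -/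

import Mathlib

/-!
The Gaussian kernel depends on `x - α x₀` only, so
`∂ₓ N(x; α x₀, σ²) = -(1/α) ∂_{x₀} N(x; α x₀, σ²)`. Differentiating under the integral sign
(the `x`-derivative of the integrand is dominated, locally uniformly in `x`, by a multiple of
`(1 + |x₀|) |π(x₀)|`) and integrating by parts in `x₀` moves the derivative onto `π`. There are
no boundary terms: `π · N` and its derivative are integrable, so `π · N` tends to `0` at `±∞`.
-/

open Real MeasureTheory Filter

/-- The one-dimensional Gaussian density with mean `m` and variance `v`:
`N(x; m, v) = (2 π v)^(-1/2) · exp(-(x - m)² / (2 v))`. -/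
noncomputable def gaussDensity1 (v m x : ℝ) : ℝ :=
  (2 * Real.pi * v) ^ (-(1 : ℝ) / 2) * Real.exp (-(x - m) ^ 2 / (2 * v))

theorem hasDerivAt_gaussDensity1 (v m x : ℝ) :
    HasDerivAt (gaussDensity1 v m) (-((x - m) / v) * gaussDensity1 v m x) x := by
  have hexp : HasDerivAt (fun y => -(y - m) ^ 2 / (2 * v)) (-((x - m) / v)) x := by
    refine (((hasDerivAt_id x).sub_const m).pow 2).neg.div_const (2 * v) |>.congr_deriv ?_
    simp only [id]
    ring
  refine (hexp.exp.const_mul ((2 * π * v) ^ (-(1 : ℝ) / 2))).congr_deriv ?_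
  simp only [gaussDensity1]
  ring

theorem gaussDensity1_eq_zero_mean (v m x : ℝ) :
    gaussDensity1 v m x = gaussDensity1 v 0 (x - m) := by
  simp [gaussDensity1]

theorem hasDerivAt_gaussDensity1_mean_mul (v α x a : ℝ) :
    HasDerivAt (fun a => gaussDensity1 v (α * a) x)
      (-α * (-((x - α * a) / v) * gaussDensity1 v (α * a) x)) a := by
  have hlin : HasDerivAt (fun a => x - α * a) (-α) a := by
    simpa using ((hasDerivAt_id a).const_mul α).const_sub x
  have h := (hasDerivAt_gaussDensity1 v 0 (x - α * a)).comp a hlin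
  simp only [Function.comp_def, sub_zero, ← gaussDensity1_eq_zero_mean] at h
  exact h.congr_deriv (by ring)

theorem norm_gaussDensity1_le {v : ℝ} (hv : 0 < v) (m x : ℝ) :
    ‖gaussDensity1 v m x‖ ≤ (2 * π * v) ^ (-(1 : ℝ) / 2) := by
  have hexp : rexp (-(x - m) ^ 2 / (2 * v)) ≤ 1 :=
    exp_le_one_iff.2 (div_nonpos_of_nonpos_of_nonneg (by nlinarith [sq_nonneg (x - m)])
      (by positivity))
  rw [gaussDensity1, Real.norm_of_nonneg (by positivity)]
  exact mul_le_of_le_one_right (by positivity) hexp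

theorem continuous_gaussDensity1_mean (v x : ℝ) : Continuous fun m => gaussDensity1 v m x := by
  unfold gaussDensity1
  fun_prop

theorem norm_deriv_gaussDensity1_le {v : ℝ} (hv : 0 < v) (m x : ℝ) :
    ‖-((x - m) / v) * gaussDensity1 v m x‖ ≤
      |x - m| / v * (2 * π * v) ^ (-(1 : ℝ) / 2) := by
  rw [norm_mul, norm_neg, norm_div, Real.norm_of_nonneg hv.le, Real.norm_eq_abs (x - m)]
  gcongr
  exact norm_gaussDensity1_le hv m x

theorem hasDerivAt_integral_mul_gaussDensity1 {f : ℝ → ℝ} {v : ℝ} (hv : 0 < v) (α : ℝ)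
    (hf : Integrable f) (hf_mom : Integrable fun a => |a| * f a) (x : ℝ) :
    Integrable (fun a => f a * (-((x - α * a) / v) * gaussDensity1 v (α * a) x)) ∧
      HasDerivAt (fun y => ∫ a, f a * gaussDensity1 v (α * a) y)
        (∫ a, f a * (-((x - α * a) / v) * gaussDensity1 v (α * a) x)) x := by
  set c := (2 * π * v) ^ (-(1 : ℝ) / 2)
  have hG_meas (y : ℝ) : AEStronglyMeasurable fun a => gaussDensity1 v (α * a) y :=
    ((continuous_gaussDensity1_mean v y).comp (continuous_const_mul α)).aestronglyMeasurable
  have hbound : Integrable fun a => c / v * ((|x| + 1) * ‖f a‖ + |α| * ‖|a| * f a‖) :=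
    ((hf.norm.const_mul _).add (hf_mom.norm.const_mul _)).const_mul _
  refine hasDerivAt_integral_of_dominated_loc_of_deriv_le (Metric.ball_mem_nhds x one_pos)
    (Eventually.of_forall fun y => hf.aestronglyMeasurable.mul (hG_meas y))
    (hf.mul_bdd (hG_meas x) (ae_of_all _ fun a => norm_gaussDensity1_le hv _ _))
    (hf.aestronglyMeasurable.mul (by fun_prop)) (ae_of_all _ fun a y hy => ?_) hbound
    (ae_of_all _ fun a y _ => (hasDerivAt_gaussDensity1 v (α * a) y).const_mul (f a))
  have hsub : |y - α * a| ≤ |x| + 1 + |α| * |a| := by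
    have := abs_sub_abs_le_abs_sub y x
    rw [Metric.mem_ball, Real.dist_eq] at hy
    linarith [abs_sub y (α * a), abs_mul α a]
  rw [norm_mul (f a)]
  calc ‖f a‖ * ‖-((y - α * a) / v) * gaussDensity1 v (α * a) y‖
      ≤ ‖f a‖ * (|y - α * a| / v * c) := by gcongr; exact norm_deriv_gaussDensity1_le hv _ y
    _ ≤ ‖f a‖ * ((|x| + 1 + |α| * |a|) / v * c) := by gcongr
    _ = c / v * ((|x| + 1) * ‖f a‖ + |α| * ‖|a| * f a‖) := by
      rw [norm_mul, norm_abs_eq_norm, Real.norm_eq_abs a]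
      ring

theorem integral_mul_deriv_gaussDensity1_eq_integral_deriv_mul {f : ℝ → ℝ} {v α : ℝ}
    (hv : 0 < v) (hα : α ≠ 0) (hf_diff : Differentiable ℝ f) (hf : Integrable f)
    (hf' : Integrable (deriv f)) (x : ℝ)
    (hF' : Integrable fun a => f a * (-((x - α * a) / v) * gaussDensity1 v (α * a) x)) :
    ∫ a, f a * (-((x - α * a) / v) * gaussDensity1 v (α * a) x) =
      (1 / α) * ∫ a, deriv f a * gaussDensity1 v (α * a) x := by
  set G := fun a => gaussDensity1 v (α * a) x
  set G' := fun a => -α * (-((x - α * a) / v) * gaussDensity1 v (α * a) x)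
  have hG_meas : AEStronglyMeasurable G :=
    ((continuous_gaussDensity1_mean v x).comp (continuous_const_mul α)).aestronglyMeasurable
  have hG_bdd : ∀ᵐ a, ‖G a‖ ≤ (2 * π * v) ^ (-(1 : ℝ) / 2) :=
    ae_of_all _ fun a => norm_gaussDensity1_le hv _ _
  have hfG' : Integrable (f * G') := by
    convert hF'.const_mul (-α) using 2 with a
    simp only [Pi.mul_apply, G']
    ring
  have hibp : ∫ a, f a * G' a = -∫ a, deriv f a * G a :=
    integral_mul_deriv_eq_deriv_mul_of_integrable (fun a _ => (hf_diff a).hasDerivAt)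
      (fun a _ => hasDerivAt_gaussDensity1_mean_mul v α x a) hfG'
      (hf'.mul_bdd hG_meas hG_bdd) (hf.mul_bdd hG_meas hG_bdd)
  calc ∫ a, f a * (-((x - α * a) / v) * gaussDensity1 v (α * a) x)
      = ∫ a, -(1 / α) * (f a * G' a) := by
        congr 1 with a
        simp only [G']
        field_simp
    _ = (1 / α) * ∫ a, deriv f a * G a := by
        rw [integral_const_mul, hibp]
        ring

theorem target_score_identity_general (α σ : ℝ) (hα : 0 < α) (hσ : 0 < σ)
    (pdens : ℝ → ℝ) (hπ_diff : Differentiable ℝ pdens)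
    (hπ_norm : ∫ x₀, pdens x₀ = 1)
    (hπ_mom : Integrable (fun x₀ => |x₀| * pdens x₀))
    (hπ'_int : Integrable (deriv pdens)) :
    Differentiable ℝ (fun x => ∫ x₀, pdens x₀ * gaussDensity1 (σ ^ 2) (α * x₀) x) ∧
    ∀ x, deriv (fun x => ∫ x₀, pdens x₀ * gaussDensity1 (σ ^ 2) (α * x₀) x) x =
      (1 / α) * ∫ x₀, deriv pdens x₀ * gaussDensity1 (σ ^ 2) (α * x₀) x := by
  have hv : 0 < σ ^ 2 := by positivity
  have hπ_int : Integrable pdens := Integrable.of_integral_ne_zero (by simp [hπ_norm])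
  have hp := hasDerivAt_integral_mul_gaussDensity1 hv α hπ_int hπ_mom
  refine ⟨fun x => (hp x).2.differentiableAt, fun x => ?_⟩
  rw [(hp x).2.deriv]
  exact integral_mul_deriv_gaussDensity1_eq_integral_deriv_mul hv hα.ne' hπ_diff hπ_int hπ'_int x
    (hp x).1

/-- **Target score identity (one-dimensional).**
If `π` is a differentiable probability density on `ℝ` with finite first moment, integrable
derivative, and `π(x_0) → 0` as `x_0 → ±∞`, then `p(x) = ∫ π(x_0)·N(x; α·x_0, σ²) dx_0` is
differentiable with `p′(x) = (1/α)·∫ π′(x_0)·N(x; α·x_0, σ²) dx_0`. -/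
theorem target_score_identity (α σ : ℝ) (hα : 0 < α) (hσ : 0 < σ)
    (pdens : ℝ → ℝ) (hπ_nonneg : ∀ x, 0 ≤ pdens x) (hπ_diff : Differentiable ℝ pdens)
    (hπ_norm : ∫ x₀, pdens x₀ = 1)
    (hπ_mom : Integrable (fun x₀ => |x₀| * pdens x₀))
    (hπ'_int : Integrable (deriv pdens))
    (hπ_top : Tendsto pdens atTop (nhds 0))
    (hπ_bot : Tendsto pdens atBot (nhds 0)) :
    Differentiable ℝ (fun x => ∫ x₀, pdens x₀ * gaussDensity1 (σ ^ 2) (α * x₀) x) ∧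
    ∀ x, deriv (fun x => ∫ x₀, pdens x₀ * gaussDensity1 (σ ^ 2) (α * x₀) x) x =
      (1 / α) * ∫ x₀, deriv pdens x₀ * gaussDensity1 (σ ^ 2) (α * x₀) x :=
  target_score_identity_general α σ hα hσ pdens hπ_diff hπ_norm hπ_mom hπ'_int
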